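/- arXiv:1612.08199 — 3 statements merged into one kernel-verified Lean document; each statement's English description precedes it below -/
import Mathlib

section
/- For any axiom set A, set of predicates P, predicate π and substitution T: if P ⊩_A π then T(P) ⊩_A T(π), where T(P) = { T π' | π' ∈ P }. That is, the entailment relation is closed under substitution. -/
/-- Types: variables, constants, and function types. -/
inductive Ty : Type
  | var : ℕ → Ty
  | const : ℕ → Ty
  | arrow : Ty → Ty → Ty
  deriving DecidableEq

/-- A type is ground if it contains no variables. -/
def Ty.Ground : Ty → Prop
  | .var _ => False
  | .const _ => True
  | .arrow t u => t.Ground ∧ u.Ground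

/-- Homomorphic extension of a substitution `S : ℕ → Ty` to types. -/
def Ty.subst (S : ℕ → Ty) : Ty → Ty
  | .var n => S n
  | .const k => .const k
  | .arrow t u => .arrow (t.subst S) (u.subst S)

/-- A substitution is ground if it maps every variable to a ground type. -/
def GroundSubst (S : ℕ → Ty) : Prop := ∀ n, (S n).Ground

/-- A predicate `C τ⃗`: a class name applied to a list of types. -/
structure OPred : Type where
  cls : ℕ
  args : List Ty
  deriving DecidableEq

/-- Substitutions act on predicates argumentwise. -/
def OPred.subst (S : ℕ → Ty) (p : OPred) : OPred := ⟨p.cls, p.args.map (Ty.subst S)⟩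

/-- An instance axiom `Q ⇒ π₀` with context `Q` and head `π₀`. -/
structure Axm : Type where
  ctx : List OPred
  head : OPred

/-- The entailment relation `P ⊩_A π`. -/
inductive Entails (A : Set Axm) : Set OPred → OPred → Prop
  | assume {P : Set OPred} {π : OPred} : π ∈ P → Entails A P π
  | axm {P : Set OPred} {ax : Axm} {S : ℕ → Ty} {π : OPred} :
      ax ∈ A → ax.head.subst S = π →
      (∀ q ∈ ax.ctx, Entails A P (q.subst S)) →
      Entails A P π

lemma Ty.subst_subst (S T : ℕ → Ty) (t : Ty) :
    (t.subst S).subst T = t.subst (fun n => (S n).subst T) := by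
  induction t <;> simp [Ty.subst, *]

lemma OPred.subst_subst (S T : ℕ → Ty) (p : OPred) :
    (p.subst S).subst T = p.subst (fun n => (S n).subst T) := by
  simp [OPred.subst, Ty.subst_subst]

/-- Entailment is closed under substitution: if `P ⊩_A π` then `T P ⊩_A T π`. -/
theorem entails_subst {A : Set Axm} {P : Set OPred} {π : OPred} (T : ℕ → Ty)
    (h : Entails A P π) : Entails A (OPred.subst T '' P) (π.subst T) := by
  induction h with
  | assume hmem => exact Entails.assume ⟨_, hmem, rfl⟩
  | @axm ax S π' hax heq _ ih =>
      refine Entails.axm (S := fun n => (S n).subst T) hax ?_ ?_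
      · rw [← OPred.subst_subst, heq]
      · intro q hq
        rw [← OPred.subst_subst]
        exact ih q hq
end

section
/- Assume the axiom set A satisfies nono(A) and cov(A) with respect to the functional dependency declarations F. If ∅ ⊩_A C τ⃗ and ∅ ⊩_A C υ⃗, (C, X, Y) ∈ F, and τ⃗ =_X υ⃗, then τ⃗ =_Y υ⃗. That is, any two predicates of class C derivable from the empty context that agree on the determining positions X of a declared functional dependency also agree on the determined positions Y. -/
/-- The set of variable indices occurring in a type. -/
def Ty.vars : Ty → Set ℕ
  | .var n => {n}
  | .const _ => ∅
  | .arrow t u => t.vars ∪ u.vars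

/-- Two lists of types agree at every position in `X`. -/
def AgreeOn (X : Set ℕ) (ts us : List Ty) : Prop := ∀ i ∈ X, ts[i]? = us[i]?

/-- `ftv_X(π)`: the variables occurring in the arguments of `π` at positions in `X`. -/
def OPred.ftvAt (π : OPred) (X : Set ℕ) : Set ℕ :=
  ⋃ i ∈ X, (match π.args[i]? with | some t => t.vars | none => ∅)

/-- Membership in the varClosure `J⁺_D` of a variable set `J` under dependencies `D`. -/
inductive InClosure (D : Set (Set ℕ × Set ℕ)) (J : Set ℕ) : ℕ → Prop
  | base {n : ℕ} : n ∈ J → InClosure D J n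
  | step {U V : Set ℕ} {n : ℕ} : (U, V) ∈ D → (∀ m ∈ U, InClosure D J m) → n ∈ V →
      InClosure D J n

/-- The varClosure `J⁺_D`: the least superset of `J` such that whenever `(U ⇝ V) ∈ D`
and `U ⊆ J⁺_D` then `V ⊆ J⁺_D`. -/
def varClosure (D : Set (Set ℕ × Set ℕ)) (J : Set ℕ) : Set ℕ := { n | InClosure D J n }

/-- `fd(F, P)`: the instantiations of the functional dependencies of `F` at the
predicates of `P`. -/
def fdInst (F : Set (ℕ × Set ℕ × Set ℕ)) (P : Set OPred) : Set (Set ℕ × Set ℕ) :=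
  { d | ∃ π ∈ P, ∃ X Y, (π.cls, X, Y) ∈ F ∧ d = (π.ftvAt X, π.ftvAt Y) }

/-- `nono(A)`: no two distinct axioms of the same class overlap on the determining
positions of a declared functional dependency. -/
def Nono (F : Set (ℕ × Set ℕ × Set ℕ)) (A : Set Axm) : Prop :=
  ∀ ax ∈ A, ∀ ax' ∈ A, ax ≠ ax' → ax.head.cls = ax'.head.cls →
    ∀ X Y : Set ℕ, (ax.head.cls, X, Y) ∈ F →
      ¬ ∃ S₀ S₁ : ℕ → Ty,
        AgreeOn X (ax.head.args.map (Ty.subst S₀)) (ax'.head.args.map (Ty.subst S₁))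

/-- `cov(A)`: for every axiom and every functional dependency of its class, the
variables in the determined positions are in the varClosure of the variables in the
determining positions under the dependencies induced by the axiom's context. -/
def Cov (F : Set (ℕ × Set ℕ × Set ℕ)) (A : Set Axm) : Prop :=
  ∀ ax ∈ A, ∀ X Y : Set ℕ, (ax.head.cls, X, Y) ∈ F →
    ax.head.ftvAt Y ⊆ varClosure (fdInst F { q | q ∈ ax.ctx }) (ax.head.ftvAt X)

lemma Ty.subst_congr {S₀ S₁ : ℕ → Ty} : ∀ {t : Ty}, (∀ n ∈ t.vars, S₀ n = S₁ n) →
    t.subst S₀ = t.subst S₁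
  | .var n, h => h n (by simp [Ty.vars])
  | .const k, _ => rfl
  | .arrow t u, h => by
      simp only [Ty.subst]
      rw [Ty.subst_congr (fun n hn => h n (Or.inl hn)),
        Ty.subst_congr (fun n hn => h n (Or.inr hn))]

lemma Ty.eq_on_vars {S₀ S₁ : ℕ → Ty} : ∀ {t : Ty}, t.subst S₀ = t.subst S₁ →
    ∀ n ∈ t.vars, S₀ n = S₁ n
  | .var m, h, n, hn => by
      simp [Ty.vars] at hn; subst hn; exact h
  | .const k, _, n, hn => by simp [Ty.vars] at hn
  | .arrow t u, h, n, hn => by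
      simp only [Ty.subst, Ty.arrow.injEq] at h
      rcases hn with hn | hn
      · exact Ty.eq_on_vars h.1 n hn
      · exact Ty.eq_on_vars h.2 n hn

lemma mem_ftvAt {π : OPred} {X : Set ℕ} {n : ℕ} :
    n ∈ π.ftvAt X ↔ ∃ i ∈ X, ∃ t, π.args[i]? = some t ∧ n ∈ t.vars := by
  simp only [OPred.ftvAt, Set.mem_iUnion]
  constructor
  · rintro ⟨i, hi, hn⟩
    cases h : π.args[i]? with
    | none => rw [h] at hn; exact absurd hn (Set.notMem_empty n)
    | some t => rw [h] at hn; exact ⟨i, hi, t, h, hn⟩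
  · rintro ⟨i, hi, t, ht, hn⟩
    refine ⟨i, hi, ?_⟩
    rw [ht]; exact hn

lemma agree_of_eqOn {π : OPred} {X : Set ℕ} {S₀ S₁ : ℕ → Ty}
    (h : ∀ n ∈ π.ftvAt X, S₀ n = S₁ n) :
    AgreeOn X (π.args.map (Ty.subst S₀)) (π.args.map (Ty.subst S₁)) := by
  intro i hi
  simp only [List.getElem?_map]
  cases ht : π.args[i]? with
  | none => rfl
  | some t =>
    simp only [Option.map_some]
    congr 1
    exact Ty.subst_congr fun n hn => h n (mem_ftvAt.2 ⟨i, hi, t, ht, hn⟩)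

lemma eqOn_of_agree {π : OPred} {X : Set ℕ} {S₀ S₁ : ℕ → Ty}
    (h : AgreeOn X (π.args.map (Ty.subst S₀)) (π.args.map (Ty.subst S₁))) :
    ∀ n ∈ π.ftvAt X, S₀ n = S₁ n := by
  intro n hn
  obtain ⟨i, hi, t, ht, hnt⟩ := mem_ftvAt.1 hn
  have := h i hi
  simp only [List.getElem?_map, ht, Option.map_some] at this
  exact Ty.eq_on_vars (Option.some.inj this) n hnt

lemma fundep_aux (F : Set (ℕ × Set ℕ × Set ℕ)) (A : Set Axm)
    (hnono : Nono F A) (hcov : Cov F A)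
    {π : OPred} (h₀ : Entails A ∅ π) :
    ∀ υs X Y, (π.cls, X, Y) ∈ F → Entails A ∅ ⟨π.cls, υs⟩ →
      AgreeOn X π.args υs → AgreeOn Y π.args υs := by
  induction h₀ with
  | assume h => exact absurd h (Set.notMem_empty _)
  | @axm AX S₀ π' hax heq hprem ih =>
    intro υs X Y hF h₁ hX
    subst heq
    cases h₁ with
    | assume h => exact absurd h (Set.notMem_empty _)
    | @axm AX' S₁ π'' hax' heq' hprem' =>
      have hC : AX.head.cls = AX'.head.cls := by
        have := congrArg OPred.cls heq'
        simpa [OPred.subst] using this.symm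
      have hargs : υs = AX'.head.args.map (Ty.subst S₁) := by
        have := congrArg OPred.args heq'
        simpa [OPred.subst] using this.symm
      have hXm : AgreeOn X (AX.head.args.map (Ty.subst S₀))
          (AX'.head.args.map (Ty.subst S₁)) := hargs ▸ hX
      -- by nono, AX = AX'
      have hee : AX = AX' := by
        by_contra hne
        exact hnono AX hax AX' hax' hne hC X Y hF ⟨S₀, S₁, hXm⟩
      subst hee
      -- closure argument
      have key : ∀ n, InClosure (fdInst F { q | q ∈ AX.ctx }) (AX.head.ftvAt X) n →
          S₀ n = S₁ n := by
        intro n hn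
        induction hn with
        | base h => exact eqOn_of_agree hXm _ h
        | @step U V m hUV hU hV ihU =>
          obtain ⟨q, hq, X', Y', hF', hd⟩ := hUV
          have hdU : U = q.ftvAt X' := (Prod.mk.injEq _ _ _ _ ▸ hd).1
          have hdV : V = q.ftvAt Y' := (Prod.mk.injEq _ _ _ _ ▸ hd).2
          have hagX' : AgreeOn X' (q.args.map (Ty.subst S₀)) (q.args.map (Ty.subst S₁)) :=
            agree_of_eqOn fun k hk => ihU k (hdU ▸ hk)
          have hder : Entails A ∅ ⟨(q.subst S₀).cls, (q.subst S₁).args⟩ := hprem' q hq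
          have hagY' := ih q hq ((q.subst S₁).args) X' Y' hF' hder hagX'
          exact eqOn_of_agree (π := q) hagY' m (hdV ▸ hV)
      have hsub := hcov AX hax X Y hF
      have heqY : ∀ n ∈ AX.head.ftvAt Y, S₀ n = S₁ n :=
        fun n hn => key n (hsub hn)
      have := agree_of_eqOn (X := Y) heqY
      rw [hargs]
      exact this

/-- Derivable predicates respect declared functional dependencies: if two class-`C`
predicates derivable from the empty context agree on the determining positions `X`
of a dependency `(C, X, Y)`, they agree on the determined positions `Y`. -/
theorem fundep_consistency (F : Set (ℕ × Set ℕ × Set ℕ)) (A : Set Axm)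
    (hnono : Nono F A) (hcov : Cov F A)
    {C : ℕ} {τs υs : List Ty} {X Y : Set ℕ}
    (h₀ : Entails A ∅ ⟨C, τs⟩) (h₁ : Entails A ∅ ⟨C, υs⟩)
    (hF : (C, X, Y) ∈ F) (hX : AgreeOn X τs υs) :
    AgreeOn Y τs υs := by
  have h₁' : Entails A ∅ ⟨(⟨C, τs⟩ : OPred).cls, υs⟩ := h₁
  exact fundep_aux F A hnono hcov h₀ υs X Y hF h₁' hX
end

section
/- Fix an axiom set A and a class name C of arity n, meaning every axiom of A whose head has class C has exactly n arguments. Fix pairwise distinct variable indices t₁, …, tₙ and a further set u⃗ of variable indices disjoint from {t₁, …, tₙ}, and let π_c = C (var t₁, …, var tₙ). Let Q be a finite list of predicates and τ a type, all of whose variables lie in {t₁, …, tₙ} ∪ u⃗, and assume the variables occurring in any class-C axiom of A are disjoint from {t₁, …, tₙ} ∪ u⃗. For each class-C axiom i = (P_i ⇒ C τ⃗_i) ∈ A, let S_i be the substitution with S_i tⱼ = τ⃗_i[j] for 1 ≤ j ≤ n and S_i m = var m for all other m. Define gr(σ_x) = { S τ | S a substitution that is ground on {t₁, …, tₙ} ∪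 u⃗ and the identity elsewhere, with ∅ ⊩_A S π_c and ∅ ⊩_A S q for every q ∈ Q }, and for each class-C axiom i define gr(σ_{x,i}) = { V (S_i τ) | V a ground substitution with ∅ ⊩_A V p for every p ∈ P_i and ∅ ⊩_A V (S_i q) for every q ∈ Q }. Then gr(σ_x) = ⋃_i gr(σ_{x,i}), the union ranging over all class-C axioms i ∈ A. (The ground instances of the type scheme of a class method are the union of its ground instances at each of the class's instances.) -/
/-- The variables occurring in a predicate. -/
def OPred.vars (π : OPred) : Set ℕ := ⋃ t ∈ π.args, t.vars

/-- The variables occurring in an axiom (head and context). -/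
def Axm.vars (ax : Axm) : Set ℕ := ax.head.vars ∪ ⋃ q ∈ ax.ctx, q.vars

namespace Ty

theorem subst_congr_s7 {S T : ℕ → Ty} : ∀ {τ : Ty}, (∀ m ∈ τ.vars, S m = T m) → τ.subst S = τ.subst T
  | .var _, h => h _ rfl
  | .const _, _ => rfl
  | .arrow _ _, h => congrArg₂ arrow (subst_congr_s7 fun m hm => h m (.inl hm))
      (subst_congr_s7 fun m hm => h m (.inr hm))

theorem subst_subst_s7 (S T : ℕ → Ty) : ∀ τ : Ty, (τ.subst S).subst T = τ.subst fun m => (S m).subst T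
  | .var _ => rfl
  | .const _ => rfl
  | .arrow a b => congrArg₂ arrow (subst_subst_s7 S T a) (subst_subst_s7 S T b)

theorem subst_eq_subst_subst {S R V : ℕ → Ty} {τ : Ty} (h : ∀ m ∈ τ.vars, S m = (R m).subst V) :
    τ.subst S = (τ.subst R).subst V := by
  rw [subst_subst_s7]
  exact subst_congr_s7 h

theorem ground_subst {S : ℕ → Ty} (hS : GroundSubst S) : ∀ τ : Ty, (τ.subst S).Ground
  | .var n => hS n
  | .const _ => trivial
  | .arrow a b => ⟨ground_subst hS a, ground_subst hS b⟩

theorem Ground.subst_eq {S : ℕ → Ty} : ∀ {τ : Ty}, τ.Ground → τ.subst S = τ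
  | .const _, _ => rfl
  | .arrow _ _, h => congrArg₂ arrow h.1.subst_eq h.2.subst_eq

end Ty

namespace OPred

theorem subst_subst_s7 (S T : ℕ → Ty) (p : OPred) :
    (p.subst S).subst T = p.subst fun m => (S m).subst T := by
  simp [OPred.subst, Ty.subst_subst_s7, Function.comp_def]

theorem subst_eq_subst_subst {S R V : ℕ → Ty} {p : OPred} (h : ∀ m ∈ p.vars, S m = (R m).subst V) :
    p.subst S = (p.subst R).subst V := by
  rw [subst_subst_s7, OPred.subst, OPred.subst]
  congr 1
  exact List.map_congr_left fun τ hτ => Ty.subst_congr_s7 fun m hm => h m (Set.mem_biUnion hτ hm)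

theorem subst_mk_ofFn_var (S : ℕ → Ty) (C : ℕ) {n : ℕ} (t : Fin n → ℕ) :
    OPred.subst S ⟨C, List.ofFn fun j => .var (t j)⟩ = ⟨C, List.ofFn fun j => S (t j)⟩ := by
  simp [OPred.subst, List.map_ofFn, Function.comp_def, Ty.subst]

theorem subst_eq_mk_ofFn_iff {p : OPred} {n : ℕ} (hp : p.args.length = n) (V : ℕ → Ty) (C : ℕ)
    (f : Fin n → Ty) (d : Ty) :
    p.subst V = ⟨C, List.ofFn f⟩ ↔ p.cls = C ∧ ∀ j : Fin n, (p.args.getD j d).subst V = f j := by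
  subst hp
  simp only [OPred.subst, OPred.mk.injEq, List.ext_getElem_iff, List.length_map, List.length_ofFn,
    List.getElem_map, List.getElem_ofFn, List.getD_eq_getElem _ _ (Fin.isLt _), true_and]
  exact and_congr_right fun _ => ⟨fun h j => h j j.isLt j.isLt, fun h i hi _ => h ⟨i, hi⟩⟩

end OPred

theorem Axm.vars_subset_of_mem_head {ax : Axm} {τ : Ty} (hτ : τ ∈ ax.head.args) :
    τ.vars ⊆ ax.vars :=
  fun _ hm => .inl (Set.mem_biUnion hτ hm)

theorem Axm.vars_subset_of_mem_ctx {ax : Axm} {p : OPred} (hp : p ∈ ax.ctx) : p.vars ⊆ ax.vars :=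
  fun _ hm => .inr (Set.mem_biUnion hp hm)

namespace Entails

variable {A : Set Axm}

theorem subst {P : Set OPred} {π : OPred} (h : Entails A P π) (T : ℕ → Ty) :
    Entails A (OPred.subst T '' P) (π.subst T) := by
  induction h with
  | assume h => exact .assume ⟨_, h, rfl⟩
  | @axm ax S π hax hhead _ ih =>
    refine .axm (S := fun m => (S m).subst T) hax ?_ fun q hq => ?_
    · rw [← OPred.subst_subst_s7, hhead]
    · rw [← OPred.subst_subst_s7]
      exact ih q hq

theorem subst_of_empty {π : OPred} (h : Entails A ∅ π) (T : ℕ → Ty) : Entails A ∅ (π.subst T) := by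
  simpa using h.subst T

theorem empty_iff {π : OPred} : Entails A ∅ π ↔
    ∃ ax ∈ A, ∃ S, ax.head.subst S = π ∧ ∀ q ∈ ax.ctx, Entails A ∅ (q.subst S) := by
  refine ⟨fun h => ?_, fun ⟨ax, hax, S, hhead, hctx⟩ => .axm hax hhead hctx⟩
  cases h with
  | assume h => exact absurd h (Set.notMem_empty _)
  | axm hax hhead hctx => exact ⟨_, hax, _, hhead, hctx⟩

end Entails

section ClassInstance

variable {A : Set Axm} {C n : ℕ} {t : Fin n → ℕ} {W : Set ℕ} {ax : Axm} {R : ℕ → Ty}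

theorem exists_subst_entails_class_of_ground (hax : ax ∈ A) (hcls : ax.head.cls = C)
    (hlen : ax.head.args.length = n) (hR : ∀ j, R (t j) = ax.head.args.getD j (.var 0))
    (htW : Set.range t ⊆ W) {V : ℕ → Ty} (hV : GroundSubst V)
    (hctx : ∀ p ∈ ax.ctx, Entails A ∅ (p.subst V)) :
    ∃ S : ℕ → Ty, (∀ m ∈ W, (S m).Ground) ∧ (∀ m ∉ W, S m = .var m) ∧
      Entails A ∅ (OPred.subst S ⟨C, List.ofFn fun j => .var (t j)⟩) ∧
      ∀ m ∈ W, S m = (R m).subst V := by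
  classical
  refine ⟨W.piecewise (fun m => (R m).subst V) .var, fun m hm => ?_,
    fun m hm => W.piecewise_eq_of_notMem _ _ hm, .axm hax ?_ hctx,
    fun m hm => W.piecewise_eq_of_mem _ _ hm⟩
  · rw [W.piecewise_eq_of_mem _ _ hm]
    exact Ty.ground_subst hV _
  · rw [OPred.subst_mk_ofFn_var, OPred.subst_eq_mk_ofFn_iff hlen _ _ _ (.var 0)]
    refine ⟨hcls, fun j => ?_⟩
    rw [W.piecewise_eq_of_mem _ _ (htW ⟨j, rfl⟩), hR]

theorem exists_ground_subst_of_head_subst_eq (hlen : ax.head.args.length = n)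
    (hR : ∀ j, R (t j) = ax.head.args.getD j (.var 0)) (hRid : ∀ m ∉ Set.range t, R m = .var m)
    (hdisj : Disjoint ax.vars W) {S S' : ℕ → Ty} (hS : ∀ m ∈ W, (S m).Ground)
    (hhead : ax.head.subst S' = OPred.subst S ⟨C, List.ofFn fun j => .var (t j)⟩)
    (hctx : ∀ p ∈ ax.ctx, Entails A ∅ (p.subst S')) :
    ∃ V : ℕ → Ty, GroundSubst V ∧ (∀ p ∈ ax.ctx, Entails A ∅ (p.subst V)) ∧
      ∀ m ∈ W, S m = (R m).subst V := by
  classical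
  rw [OPred.subst_mk_ofFn_var, OPred.subst_eq_mk_ofFn_iff hlen _ _ _ (.var 0)] at hhead
  -- `S'` may leave variables of the axiom open; any ground `g` closes them.
  let g : ℕ → Ty := fun _ => .const 0
  let V := W.piecewise S fun m => (S' m).subst g
  have hV_W : ∀ m ∈ W, V m = S m := fun m hm => W.piecewise_eq_of_mem _ _ hm
  have hV_off : ∀ m ∉ W, V m = (S' m).subst g := fun m hm => W.piecewise_eq_of_notMem _ _ hm
  have hV_ax : ∀ m ∈ ax.vars, V m = (S' m).subst g := fun m hm =>
    hV_off m (Set.disjoint_left.1 hdisj hm)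
  have hg : GroundSubst g := fun _ => trivial
  refine ⟨V, fun m => ?_, fun p hp => ?_, fun m hm => ?_⟩
  · by_cases hm : m ∈ W
    · rw [hV_W m hm]
      exact hS m hm
    · rw [hV_off m hm]
      exact Ty.ground_subst hg _
  · rw [OPred.subst_eq_subst_subst fun m hm => hV_ax m (Axm.vars_subset_of_mem_ctx hp hm)]
    exact (hctx p hp).subst_of_empty g
  · by_cases ht : m ∈ Set.range t
    · obtain ⟨j, rfl⟩ := ht
      have hmem : ax.head.args.getD j (.var 0) ∈ ax.head.args := by
        rw [List.getD_eq_getElem _ _ (hlen ▸ j.isLt)]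
        exact List.getElem_mem _
      rw [hR, Ty.subst_eq_subst_subst fun m hm => hV_ax m (Axm.vars_subset_of_mem_head hmem hm),
        hhead.2 j, (hS _ hm).subst_eq]
    · rw [hRid m ht]
      exact (hV_W m hm).symm

end ClassInstance

theorem method_scheme_ground_instances_general
    (A : Set Axm) (C n : ℕ)
    -- `C` has arity `n` in `A`
    (harity : ∀ ax ∈ A, ax.head.cls = C → ax.head.args.length = n)
    -- class variables `t₁, …, tₙ`, pairwise distinct, and further variables `u⃗`
    (t : Fin n → ℕ)
    (u : Set ℕ)
    -- the context `Q` and type `τ` of the method's signature, with variables in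
    -- `{t₁, …, tₙ} ∪ u⃗`
    (Q : List OPred) (τ : Ty)
    (hτ : τ.vars ⊆ Set.range t ∪ u)
    (hQ : ∀ q ∈ Q, q.vars ⊆ Set.range t ∪ u)
    -- the variables of class-`C` axioms are disjoint from `{t₁, …, tₙ} ∪ u⃗`
    (hdisj : ∀ ax ∈ A, ax.head.cls = C → Disjoint ax.vars (Set.range t ∪ u))
    -- for each class-`C` axiom `i = (P_i ⇒ C τ⃗_i)`, the substitution `S_i`
    -- with `S_i tⱼ = τ⃗_i[j]` and `S_i m = var m` for all other `m`
    (Si : Axm → ℕ → Ty)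
    (hSi : ∀ ax ∈ A, ax.head.cls = C →
      (∀ j : Fin n, Si ax (t j) = ax.head.args.getD j (Ty.var 0)) ∧
      (∀ m : ℕ, m ∉ Set.range t → Si ax m = Ty.var m)) :
    -- `gr(σ_x)` …
    { υ : Ty | ∃ S : ℕ → Ty,
        (∀ m ∈ Set.range t ∪ u, (S m).Ground) ∧
        (∀ m, m ∉ Set.range t ∪ u → S m = Ty.var m) ∧
        Entails A ∅ (OPred.subst S ⟨C, List.ofFn fun j => Ty.var (t j)⟩) ∧
        (∀ q ∈ Q, Entails A ∅ (q.subst S)) ∧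
        υ = τ.subst S }
    -- … equals `⋃_i gr(σ_{x,i})`
    = { υ : Ty | ∃ ax ∈ A, ax.head.cls = C ∧ ∃ V : ℕ → Ty,
        GroundSubst V ∧
        (∀ p ∈ ax.ctx, Entails A ∅ (p.subst V)) ∧
        (∀ q ∈ Q, Entails A ∅ ((q.subst (Si ax)).subst V)) ∧
        υ = (τ.subst (Si ax)).subst V } := by
  ext υ
  constructor
  · rintro ⟨S, hS, -, hent, hQS, rfl⟩
    obtain ⟨ax, hax, S', hhead, hctx⟩ := Entails.empty_iff.1 hent
    have hcls : ax.head.cls = C := congrArg OPred.cls hhead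
    obtain ⟨hR, hRid⟩ := hSi ax hax hcls
    obtain ⟨V, hV, hctxV, hSV⟩ := exists_ground_subst_of_head_subst_eq (harity ax hax hcls) hR hRid
      (hdisj ax hax hcls) hS hhead hctx
    refine ⟨ax, hax, hcls, V, hV, hctxV, fun q hq => ?_,
      Ty.subst_eq_subst_subst fun m hm => hSV m (hτ hm)⟩
    rw [← OPred.subst_eq_subst_subst fun m hm => hSV m (hQ q hq hm)]
    exact hQS q hq
  · rintro ⟨ax, hax, hcls, V, hV, hctx, hQV, rfl⟩
    obtain ⟨S, hS, hSid, hent, hSV⟩ := exists_subst_entails_class_of_ground hax hcls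
      (harity ax hax hcls) (hSi ax hax hcls).1 Set.subset_union_left hV hctx
    refine ⟨S, hS, hSid, hent, fun q hq => ?_,
      (Ty.subst_eq_subst_subst fun m hm => hSV m (hτ hm)).symm⟩
    rw [OPred.subst_eq_subst_subst fun m hm => hSV m (hQ q hq hm)]
    exact hQV q hq

/-- The ground instances of the type scheme of a class method are the union of its
ground instances at each of the class's instances:
`gr(σ_x) = ⋃_{⟨x,d⟩ ∈ dom Im} gr(σ_{x,d})`. -/
theorem method_scheme_ground_instances
    (A : Set Axm) (C n : ℕ)
    -- `C` has arity `n` in `A`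
    (harity : ∀ ax ∈ A, ax.head.cls = C → ax.head.args.length = n)
    -- class variables `t₁, …, tₙ`, pairwise distinct, and further variables `u⃗`
    (t : Fin n → ℕ) (ht : Function.Injective t)
    (u : Set ℕ) (htu : ∀ j : Fin n, t j ∉ u)
    -- the context `Q` and type `τ` of the method's signature, with variables in
    -- `{t₁, …, tₙ} ∪ u⃗`
    (Q : List OPred) (τ : Ty)
    (hτ : τ.vars ⊆ Set.range t ∪ u)
    (hQ : ∀ q ∈ Q, q.vars ⊆ Set.range t ∪ u)
    -- the variables of class-`C` axioms are disjoint from `{t₁, …, tₙ} ∪ u⃗`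
    (hdisj : ∀ ax ∈ A, ax.head.cls = C → Disjoint ax.vars (Set.range t ∪ u))
    -- for each class-`C` axiom `i = (P_i ⇒ C τ⃗_i)`, the substitution `S_i`
    -- with `S_i tⱼ = τ⃗_i[j]` and `S_i m = var m` for all other `m`
    (Si : Axm → ℕ → Ty)
    (hSi : ∀ ax ∈ A, ax.head.cls = C →
      (∀ j : Fin n, Si ax (t j) = ax.head.args.getD j (Ty.var 0)) ∧
      (∀ m : ℕ, m ∉ Set.range t → Si ax m = Ty.var m)) :
    -- `gr(σ_x)` …
    { υ : Ty | ∃ S : ℕ → Ty,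
        (∀ m ∈ Set.range t ∪ u, (S m).Ground) ∧
        (∀ m, m ∉ Set.range t ∪ u → S m = Ty.var m) ∧
        Entails A ∅ (OPred.subst S ⟨C, List.ofFn fun j => Ty.var (t j)⟩) ∧
        (∀ q ∈ Q, Entails A ∅ (q.subst S)) ∧
        υ = τ.subst S }
    -- … equals `⋃_i gr(σ_{x,i})`
    = { υ : Ty | ∃ ax ∈ A, ax.head.cls = C ∧ ∃ V : ℕ → Ty,
        GroundSubst V ∧
        (∀ p ∈ ax.ctx, Entails A ∅ (p.subst V)) ∧
        (∀ q ∈ Q, Entails A ∅ ((q.subst (Si ax)).subst V)) ∧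
        υ = (τ.subst (Si ax)).subst V } :=
  method_scheme_ground_instances_general A C n harity t u Q τ hτ hQ hdisj Si hSi
end
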